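/- Let $\ggo$ be a real semisimple Lie algebra with Cartan decomposition $\ggo=\hg\oplus\qg$ and the inner product $-B|_\hg + B|_\qg$, normalized so $B(X,X)=\pm\langle X,X\rangle$ on $\hg,\qg$. Define $\mathrm{Cas}_\ggo(A) := \sum_i[(\mathrm{ad}\,X_i)^t,[\mathrm{ad}\,X_i,A]]$ for an orthonormal basis $\{X_i\}$ adapted to the decomposition. Then for any symmetric $A\in\mathrm{Sym}(\ggo)$ that is orthogonal to $\mathrm{ad}(\ggo)$ (in the trace inner product), one has $\tfrac12|\delta_\mu(A)|^2 - \tfrac12|A|^2 = \tfrac12\langle\mathrm{Cas}_\ggo(A),A\rangle$, where $\delta_\mu(A) := -A\mu(\cdot,\cdot)+\mu(A\cdot,\cdot)+\mu(\cdot,A\cdot)$ and $\mu$ is the Lie bracket. -/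

import Mathlib

/-!
The reflection `θ` in `h` is an automorphism of the bracket with `⟪X, Y⟫ = -B(X, θ Y)`, so
invariance of the Killing form gives `(ad X)ᵗ = -ad (θ X)`: the image `ad(𝔤)` is closed under
transposition and `ad` is an isometry onto it for the trace inner product. Since
`δ_μ(A)(X, ·) = [ad X, A] + ad (A X)`, the cross term
`⟨ad (A X), [ad X, A]⟩ = ⟨[(ad X)ᵗ, ad (A X)], A⟩` vanishes because
`[(ad X)ᵗ, ad (A X)] ∈ ad(𝔤) ⊥ A`, while `|[ad X, A]|² = ⟨[(ad X)ᵗ, [ad X, A]], A⟩` and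
`|ad (A X)|² = |A X|²`. Summing over `X = Xᵢ` gives the identity.
-/

noncomputable section

variable {V : Type*} [NormedAddCommGroup V] [InnerProductSpace ℝ V] [FiniteDimensional ℝ V]

/-- The Killing form `B(X,Y) = tr(ad X ∘ ad Y)` of the bracket `μ`. -/
def killing (μ : V →ₗ[ℝ] V →ₗ[ℝ] V) (X Y : V) : ℝ :=
  LinearMap.trace ℝ V (μ X ∘ₗ μ Y)

/-- Commutator of endomorphisms. -/
def opComm (P Q : Module.End ℝ V) : Module.End ℝ V := P ∘ₗ Q - Q ∘ₗ P

/-- The trace inner product `⟨A,B⟩ = tr(A Bᵗ)` on `gl(V)`. -/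
def eip (A B : Module.End ℝ V) : ℝ :=
  LinearMap.trace ℝ V (A ∘ₗ LinearMap.adjoint (B : V →ₗ[ℝ] V))

/-- The inner product on bilinear maps relative to an orthonormal basis. -/
def bip {ι : Type*} [Fintype ι] (b : OrthonormalBasis ι ℝ V) (f g : V → V → V) : ℝ :=
  ∑ i, ∑ j, (inner ℝ (f (b i) (b j)) (g (b i) (b j)) : ℝ)

/-- `δ_μ(A) = -Aμ(·,·) + μ(A·,·) + μ(·,A·)`. -/
def deltaMap (μ : V →ₗ[ℝ] V →ₗ[ℝ] V) (A : Module.End ℝ V) : V → V → V :=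
  fun X Y => -(A (μ X Y)) + μ (A X) Y + μ X (A Y)

/-- `Cas_g(A) = ∑ [(ad Xᵢ)ᵗ, [ad Xᵢ, A]]`. -/
def casG {ι : Type*} [Fintype ι] (b : OrthonormalBasis ι ℝ V)
    (μ : V →ₗ[ℝ] V →ₗ[ℝ] V) (A : Module.End ℝ V) : Module.End ℝ V :=
  ∑ i, opComm (LinearMap.adjoint (μ (b i))) (opComm (μ (b i)) A)

open LinearMap (adjoint)

section LieBracket

omit [FiniteDimensional ℝ V]

variable (μ : V →ₗ[ℝ] V →ₗ[ℝ] V)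

lemma bracket_swap (halt : ∀ X, μ X X = 0) (X Y : V) : μ X Y = -μ Y X := by
  have h := halt (X + Y)
  simp only [map_add, LinearMap.add_apply, halt, zero_add, add_zero] at h
  exact eq_neg_of_add_eq_zero_right h

variable {μ} in
lemma ad_bracket (hjac : ∀ X Y Z, μ X (μ Y Z) = μ (μ X Y) Z + μ Y (μ X Z)) (X Y : V) :
    μ (μ X Y) = opComm (μ X) (μ Y) := by
  ext Z
  simp [opComm, hjac X Y Z]

lemma killing_comm (X Y : V) : killing μ X Y = killing μ Y X :=
  LinearMap.trace_mul_comm ℝ (μ X) (μ Y)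

variable {μ} in
lemma killing_bracket_left (hjac : ∀ X Y Z, μ X (μ Y Z) = μ (μ X Y) Z + μ Y (μ X Z))
    (X Y Z : V) : killing μ (μ X Y) Z = -killing μ Y (μ X Z) := by
  simp only [killing, ad_bracket hjac, opComm, ← Module.End.mul_eq_comp, sub_mul, mul_sub,
    map_sub]
  rw [← mul_assoc (μ Y) (μ Z), LinearMap.trace_mul_cycle ℝ (μ Y) (μ Z) (μ X), mul_assoc (μ Y)]
  ring

lemma deltaMap_apply_eq (A : Module.End ℝ V) (X Y : V) :
    deltaMap μ A X Y = (opComm (μ X) A + μ (A X)) Y := by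
  simp only [deltaMap, opComm, LinearMap.add_apply, LinearMap.sub_apply, LinearMap.comp_apply]
  abel

end LieBracket

section TraceInner

lemma trace_adjoint (T : Module.End ℝ V) :
    LinearMap.trace ℝ V (adjoint T) = LinearMap.trace ℝ V T := by
  simp only [LinearMap.trace_eq_sum_inner _ (stdOrthonormalBasis ℝ V),
    LinearMap.adjoint_inner_right, real_inner_comm]

lemma eip_comm (P Q : Module.End ℝ V) : eip P Q = eip Q P := by
  rw [eip, ← trace_adjoint, LinearMap.adjoint_comp, LinearMap.adjoint_adjoint, eip]

lemma eip_add_left (P Q R : Module.End ℝ V) : eip (P + Q) R = eip P R + eip Q R := by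
  simp only [eip, LinearMap.add_comp, map_add]

lemma eip_add_right (P Q R : Module.End ℝ V) : eip P (Q + R) = eip P Q + eip P R := by
  rw [eip_comm, eip_add_left, eip_comm Q, eip_comm R]

lemma eip_sum_left {ι : Type*} (s : Finset ι) (P : ι → Module.End ℝ V) (R : Module.End ℝ V) :
    eip (∑ i ∈ s, P i) R = ∑ i ∈ s, eip (P i) R := by
  simp only [eip, ← Module.End.mul_eq_comp, Finset.sum_mul, map_sum]

lemma eip_self_eq_sum {ι : Type*} [Fintype ι] (b : OrthonormalBasis ι ℝ V)
    (T : Module.End ℝ V) :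
    eip T T = ∑ j, (inner ℝ (T (b j)) (T (b j)) : ℝ) := by
  rw [eip, LinearMap.trace_comp_comm', LinearMap.trace_eq_sum_inner _ b]
  simp only [LinearMap.comp_apply, LinearMap.adjoint_inner_right]

lemma eip_opComm_right (P Q R : Module.End ℝ V) :
    eip Q (opComm P R) = eip (opComm (adjoint P) Q) R := by
  simp only [eip, opComm, map_sub, LinearMap.adjoint_comp]
  simp only [← Module.End.mul_eq_comp, mul_sub, sub_mul, map_sub]
  rw [LinearMap.trace_mul_cycle', mul_assoc, mul_assoc]

end TraceInner

section AdjointAd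

variable {μ : V →ₗ[ℝ] V →ₗ[ℝ] V} (hjac : ∀ X Y Z, μ X (μ Y Z) = μ (μ X Y) Z + μ Y (μ X Z))
  {θ : V → V} (hθμ : ∀ u v, θ (μ u v) = μ (θ u) (θ v))
  (hinner : ∀ u v, (inner ℝ u v : ℝ) = -killing μ u (θ v))
include hjac hθμ hinner

lemma adjoint_ad_eq_neg_ad (X : V) : adjoint (μ X) = -μ (θ X) := by
  refine ((LinearMap.eq_adjoint_iff _ _).2 fun u v => ?_).symm
  rw [LinearMap.neg_apply, inner_neg_left, hinner, hinner u, hθμ, killing_bracket_left hjac,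
    neg_neg]

lemma eip_ad_self (Z : V) : eip (μ Z) (μ Z) = (inner ℝ Z Z : ℝ) := by
  rw [eip, adjoint_ad_eq_neg_ad hjac hθμ hinner, LinearMap.comp_neg, map_neg, hinner]
  rfl

end AdjointAd

section CartanDecomposition

variable {μ : V →ₗ[ℝ] V →ₗ[ℝ] V} {h q : Submodule ℝ V}

lemma reflection_add_of_mem (horth : ∀ x ∈ h, ∀ y ∈ q, (inner ℝ x y : ℝ) = 0) {x y : V}
    (hx : x ∈ h) (hy : y ∈ q) : h.reflection (x + y) = x - y := by
  have hy' : y ∈ hᗮ := (Submodule.mem_orthogonal h y).2 fun u hu => horth u hu y hy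
  rw [map_add, Submodule.reflection_mem_subspace_eq_self hx,
    Submodule.reflection_mem_subspace_orthogonalComplement_eq_neg hy', sub_eq_add_neg]

lemma reflection_bracket (halt : ∀ X, μ X X = 0) (hc : IsCompl h q)
    (horth : ∀ x ∈ h, ∀ y ∈ q, (inner ℝ x y : ℝ) = 0)
    (hhh : ∀ x ∈ h, ∀ y ∈ h, μ x y ∈ h) (hhq : ∀ x ∈ h, ∀ y ∈ q, μ x y ∈ q)
    (hqq : ∀ x ∈ q, ∀ y ∈ q, μ x y ∈ h) (u v : V) :
    h.reflection (μ u v) = μ (h.reflection u) (h.reflection v) := by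
  obtain ⟨x, y, hx, hy, rfl⟩ := Submodule.codisjoint_iff_exists_add_eq.mp hc.codisjoint u
  obtain ⟨x', y', hx', hy', rfl⟩ := Submodule.codisjoint_iff_exists_add_eq.mp hc.codisjoint v
  have hyx' : μ y x' ∈ q := by
    rw [bracket_swap μ halt]
    exact q.neg_mem (hhq x' hx' y hy)
  have hsplit : μ (x + y) (x' + y') = (μ x x' + μ y y') + (μ x y' + μ y x') := by
    simp only [map_add, LinearMap.add_apply]
    abel
  rw [hsplit, reflection_add_of_mem horth (h.add_mem (hhh x hx x' hx') (hqq y hy y' hy'))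
    (q.add_mem (hhq x hx y' hy') hyx'), reflection_add_of_mem horth hx hy,
    reflection_add_of_mem horth hx' hy']
  simp only [map_sub, LinearMap.sub_apply]
  abel

lemma inner_eq_neg_killing_reflection (hc : IsCompl h q)
    (horth : ∀ x ∈ h, ∀ y ∈ q, (inner ℝ x y : ℝ) = 0)
    (hBh : ∀ x ∈ h, ∀ y ∈ h, killing μ x y = -(inner ℝ x y : ℝ))
    (hBq : ∀ x ∈ q, ∀ y ∈ q, killing μ x y = (inner ℝ x y : ℝ))
    (hBhq : ∀ x ∈ h, ∀ y ∈ q, killing μ x y = 0) (u v : V) :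
    (inner ℝ u v : ℝ) = -killing μ u (h.reflection v) := by
  obtain ⟨x, y, hx, hy, rfl⟩ := Submodule.codisjoint_iff_exists_add_eq.mp hc.codisjoint u
  obtain ⟨x', y', hx', hy', rfl⟩ := Submodule.codisjoint_iff_exists_add_eq.mp hc.codisjoint v
  have hsplit : killing μ (x + y) (x' - y') =
      killing μ x x' - killing μ x y' + killing μ y x' - killing μ y y' := by
    simp only [killing, map_add, map_sub, LinearMap.add_comp, LinearMap.comp_sub]
    ring
  rw [reflection_add_of_mem horth hx' hy', hsplit, hBh x hx x' hx', hBhq x hx y' hy',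
    killing_comm μ y x', hBhq x' hx' y hy, hBq y hy y' hy', inner_add_left, inner_add_right,
    inner_add_right, horth x hx y' hy', real_inner_comm x' y, horth x' hx' y hy]
  ring

end CartanDecomposition

section DeltaNorm

variable {ι : Type*} [Fintype ι] (b : OrthonormalBasis ι ℝ V) {μ : V →ₗ[ℝ] V →ₗ[ℝ] V}
  (hjac : ∀ X Y Z, μ X (μ Y Z) = μ (μ X Y) Z + μ Y (μ X Z))
  (hadj : ∀ X, ∃ Y, adjoint (μ X) = μ Y)
  (hiso : ∀ Z, eip (μ Z) (μ Z) = (inner ℝ Z Z : ℝ))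
  {A : Module.End ℝ V} (hAort : ∀ Y : V, eip A (μ Y) = 0)
include hjac hadj hiso hAort

lemma sum_inner_deltaMap (X : V) :
    ∑ j, (inner ℝ (deltaMap μ A X (b j)) (deltaMap μ A X (b j)) : ℝ) =
      eip (opComm (adjoint (μ X)) (opComm (μ X) A)) A + (inner ℝ (A X) (A X) : ℝ) := by
  have hcross : eip (μ (A X)) (opComm (μ X) A) = 0 := by
    obtain ⟨Y, hY⟩ := hadj X
    rw [eip_opComm_right, hY, ← ad_bracket hjac, eip_comm, hAort]
  calc ∑ j, (inner ℝ (deltaMap μ A X (b j)) (deltaMap μ A X (b j)) : ℝ)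
      = eip (opComm (μ X) A + μ (A X)) (opComm (μ X) A + μ (A X)) := by
        simp only [eip_self_eq_sum b, deltaMap_apply_eq]
    _ = eip (opComm (μ X) A) (opComm (μ X) A) + eip (μ (A X)) (μ (A X)) := by
        rw [eip_add_left, eip_add_right, eip_add_right, eip_comm (opComm (μ X) A) (μ (A X)),
          hcross]
        ring
    _ = _ := by rw [eip_opComm_right, hiso]

lemma bip_deltaMap_self :
    bip b (deltaMap μ A) (deltaMap μ A) = eip (casG b μ A) A + eip A A := by
  simp only [bip, sum_inner_deltaMap b hjac hadj hiso hAort, Finset.sum_add_distrib, casG,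
    eip_sum_left, eip_self_eq_sum b A]

end DeltaNorm

theorem statement8_general {n : ℕ} (μ : V →ₗ[ℝ] V →ₗ[ℝ] V)
    (halt : ∀ X, μ X X = 0)
    (hjac : ∀ X Y Z, μ X (μ Y Z) = μ (μ X Y) Z + μ Y (μ X Z))
    (h q : Submodule ℝ V) (hc : IsCompl h q)
    (horth : ∀ x ∈ h, ∀ y ∈ q, (inner ℝ x y : ℝ) = 0)
    (hhh : ∀ x ∈ h, ∀ y ∈ h, μ x y ∈ h)
    (hhq : ∀ x ∈ h, ∀ y ∈ q, μ x y ∈ q)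
    (hqq : ∀ x ∈ q, ∀ y ∈ q, μ x y ∈ h)
    (hBh : ∀ x ∈ h, ∀ y ∈ h, killing μ x y = -(inner ℝ x y : ℝ))
    (hBq : ∀ x ∈ q, ∀ y ∈ q, killing μ x y = (inner ℝ x y : ℝ))
    (hBhq : ∀ x ∈ h, ∀ y ∈ q, killing μ x y = 0)
    (b : OrthonormalBasis (Fin n) ℝ V)
    (A : Module.End ℝ V)
    (hAort : ∀ Y : V, eip A (μ Y) = 0) :
    (1/2) * bip b (deltaMap μ A) (deltaMap μ A) - (1/2) * eip A A =
      (1/2) * eip (casG b μ A) A := by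
  have hθμ := reflection_bracket halt hc horth hhh hhq hqq
  have hinner := inner_eq_neg_killing_reflection hc horth hBh hBq hBhq
  have hadj (X : V) : ∃ Y, adjoint (μ X) = μ Y :=
    ⟨-h.reflection X, by rw [adjoint_ad_eq_neg_ad hjac hθμ hinner, map_neg]⟩
  rw [bip_deltaMap_self b hjac hadj (eip_ad_self hjac hθμ hinner) hAort]
  ring

/-- for a real semisimple Lie algebra with Cartan decomposition and the
inner product `-B|_h + B|_q`, an orthonormal basis adapted to the decomposition, and a
symmetric `A` orthogonal to `ad(g)`, one has
`½|δ_μ(A)|² - ½|A|² = ½⟨Cas_g(A), A⟩`. -/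
theorem statement8 {n : ℕ} (μ : V →ₗ[ℝ] V →ₗ[ℝ] V)
    (halt : ∀ X, μ X X = 0)
    (hjac : ∀ X Y Z, μ X (μ Y Z) = μ (μ X Y) Z + μ Y (μ X Z))
    (hss : ∀ X : V, (∀ Y : V, killing μ X Y = 0) → X = 0)
    (h q : Submodule ℝ V) (hc : IsCompl h q)
    (horth : ∀ x ∈ h, ∀ y ∈ q, (inner ℝ x y : ℝ) = 0)
    (hhh : ∀ x ∈ h, ∀ y ∈ h, μ x y ∈ h)
    (hhq : ∀ x ∈ h, ∀ y ∈ q, μ x y ∈ q)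
    (hqq : ∀ x ∈ q, ∀ y ∈ q, μ x y ∈ h)
    (hBh : ∀ x ∈ h, ∀ y ∈ h, killing μ x y = -(inner ℝ x y : ℝ))
    (hBq : ∀ x ∈ q, ∀ y ∈ q, killing μ x y = (inner ℝ x y : ℝ))
    (hBhq : ∀ x ∈ h, ∀ y ∈ q, killing μ x y = 0)
    (b : OrthonormalBasis (Fin n) ℝ V)
    (hb : ∀ i, b i ∈ h ∨ b i ∈ q)
    (A : Module.End ℝ V) (hA : LinearMap.IsSymmetric (A : V →ₗ[ℝ] V))
    (hAort : ∀ Y : V, eip A (μ Y) = 0) :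
    (1/2) * bip b (deltaMap μ A) (deltaMap μ A) - (1/2) * eip A A =
      (1/2) * eip (casG b μ A) A :=
  statement8_general μ halt hjac h q hc horth hhh hhq hqq hBh hBq hBhq b A hAort
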